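/- arXiv:2208.01531 — 3 statements merged into one kernel-verified Lean document; each statement's English description precedes it below -/
import Mathlib

section
/- Let K be an algebraically closed field in which d and each of w₁,…,wₙ are invertible, and let λ ∈ K satisfy λ^d ≠ 1. Set Q_λ := w₁X₁^d + ⋯ + wₙXₙ^d − dλ·X₁^{w₁}⋯Xₙ^{wₙ} ∈ K[X₁,…,Xₙ]. Then for every nonzero point x = (x₁,…,xₙ) ∈ Kⁿ with Q_λ(x) = 0, there exists an index i with (∂Q_λ/∂Xᵢ)(x) ≠ 0; i.e., the hypersurface Q_λ = 0 is nonsingular away from the origin whenever λ^d ≠ 1. -/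
open MvPolynomial



lemma pderiv_prod_zero {K : Type*} [CommSemiring K] {n : ℕ} (i : Fin n)
    (s : Finset (Fin n)) (f : Fin n → MvPolynomial (Fin n) K)
    (h : ∀ j ∈ s, pderiv i (f j) = 0) :
    pderiv i (∏ j ∈ s, f j) = 0 := by
  induction s using Finset.cons_induction with
  | empty => simp
  | cons a s ha ih =>
    rw [Finset.prod_cons, pderiv_mul, h a (Finset.mem_cons_self a s),
      ih (fun j hj => h j (Finset.mem_cons_of_mem hj))]
    ring

lemma key_pderiv {K : Type*} [Field K] {n : ℕ} (d : ℕ) (w : Fin n → ℕ)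
    (lam : K) (i : Fin n) (x : Fin n → K) :
    x i * eval x (pderiv i ((∑ j, C (w j : K) * X j ^ d)
          - C ((d : K) * lam) * ∏ j, X j ^ w j))
      = (d : K) * (w i : K) * (x i ^ d - lam * ∏ j, x j ^ w j) := by
  have hprod : (∏ j, (X j : MvPolynomial (Fin n) K) ^ w j)
      = X i ^ w i * ∏ j ∈ Finset.univ.erase i, X j ^ w j :=
    (Finset.mul_prod_erase Finset.univ _ (Finset.mem_univ i)).symm
  have hrest : pderiv i (∏ j ∈ Finset.univ.erase i, (X j : MvPolynomial (Fin n) K) ^ w j) = 0 := by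
    apply pderiv_prod_zero
    intro j hj
    rw [pderiv_pow, pderiv_X_of_ne (Finset.ne_of_mem_erase hj)]
    ring
  have hsum : pderiv i (∑ j, C (w j : K) * X j ^ d)
      = C (w i : K) * ((d : MvPolynomial (Fin n) K) * X i ^ (d - 1)) := by
    rw [map_sum, Finset.sum_eq_single i]
    · rw [pderiv_C_mul, pderiv_pow, pderiv_X_self, mul_one]
    · intro j _ hj
      rw [pderiv_C_mul, pderiv_pow, pderiv_X_of_ne hj]
      ring
    · simp
  rw [map_sub, hsum, hprod, pderiv_C_mul, pderiv_mul, hrest, pderiv_pow, pderiv_X_self]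
  simp only [map_sub, map_mul, map_sum, eval_C, eval_X, map_pow, map_natCast, mul_one,
    mul_zero, add_zero, map_prod]
  have e1 : x i * x i ^ (d - 1) = x i ^ d ∨ (d : K) = 0 := by
    rcases Nat.eq_zero_or_pos d with h | h
    · right; simp [h]
    · left; rw [← pow_succ', Nat.sub_add_cancel h]
  have e2 : x i * ((w i : K) * x i ^ (w i - 1)) = (w i : K) * x i ^ w i ∨ (w i : K) = 0 := by
    rcases Nat.eq_zero_or_pos (w i) with h | h
    · right; simp [h]
    · left; rw [← mul_assoc, mul_comm (x i), mul_assoc, ← pow_succ', Nat.sub_add_cancel h]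
  have hP : (∏ j, x j ^ w j) = x i ^ w i * ∏ j ∈ Finset.univ.erase i, x j ^ w j :=
    (Finset.mul_prod_erase Finset.univ _ (Finset.mem_univ i)).symm
  rcases e1 with e1 | e1
  · rcases e2 with e2 | e2
    · rw [hP]
      linear_combination ((d:K)*(w i : K)) * e1
        - (d:K)*lam*(∏ j ∈ Finset.univ.erase i, x j ^ w j) * e2
    · simp only [e2, zero_mul, mul_zero, sub_zero]
  · simp only [e1, zero_mul, mul_zero, sub_zero]

/-- Smoothness of the generalized Dwork family (Katz, Lemma 2.1): over an
algebraically closed field `K` in which `d` and the `wᵢ` are invertible, if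
`λ^d ≠ 1` then the hypersurface
`Q_λ = w₁X₁^d + ⋯ + wₙXₙ^d - dλ·X₁^{w₁}⋯Xₙ^{wₙ} = 0` is nonsingular away
from the origin: at every nonzero zero of `Q_λ`, some partial derivative
`∂Q_λ/∂Xᵢ` is nonzero. -/
theorem dwork_family_smooth {K : Type*} [Field K] [IsAlgClosed K]
    (n d : ℕ) (hn : 3 ≤ n) (hnd : n ≤ d) (w : Fin n → ℕ)
    (hwpos : ∀ i, 0 < w i) (hsum : ∑ i, w i = d)
    (hgcd : Finset.univ.gcd w = 1)
    (hdK : (d : K) ≠ 0) (hwK : ∀ i, (w i : K) ≠ 0)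
    (lam : K) (hlam : lam ^ d ≠ 1) :
    ∀ x : Fin n → K, x ≠ 0 →
      eval x ((∑ i, C (w i : K) * X i ^ d)
          - C ((d : K) * lam) * ∏ i, X i ^ w i) = 0 →
      ∃ i, eval x (pderiv i ((∑ i, C (w i : K) * X i ^ d)
          - C ((d : K) * lam) * ∏ i, X i ^ w i)) ≠ 0 := by
  intro x hx _
  by_contra hall
  push_neg at hall
  set P : K := ∏ j, x j ^ w j with hPdef
  have key : ∀ i, x i ^ d = lam * P := by
    intro i
    have h := key_pderiv d w lam i x
    rw [hall i, mul_zero] at h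
    have := mul_ne_zero hdK (hwK i)
    have h2 := (mul_eq_zero.mp h.symm).resolve_left this
    exact sub_eq_zero.mp h2
  have hd0 : 0 < d := lt_of_lt_of_le (by omega) hnd
  rcases eq_or_ne (lam * P) 0 with h0 | h0
  · apply hx
    funext i
    have := key i
    rw [h0] at this
    exact pow_eq_zero_iff hd0.ne' |>.mp this
  · have hPne : P ≠ 0 := fun h => h0 (by rw [h, mul_zero])
    have hPd : P ^ d = lam ^ d * P ^ d := by
      calc P ^ d = ∏ j, (x j ^ d) ^ w j := by
            rw [hPdef, ← Finset.prod_pow]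
            exact Finset.prod_congr rfl fun j _ => by rw [← pow_mul, ← pow_mul, mul_comm]
        _ = ∏ j, (lam * P) ^ w j := Finset.prod_congr rfl fun j _ => by rw [key j]
        _ = (lam * P) ^ d := by rw [Finset.prod_pow_eq_pow_sum, hsum]
        _ = lam ^ d * P ^ d := mul_pow _ _ _
    have hPdne : P ^ d ≠ 0 := pow_ne_zero _ hPne
    exact hlam (mul_right_cancel₀ hPdne (by rw [one_mul]; exact hPd)).symm
end

section
/- Let K be a field of characteristic zero, p ≥ 1 an integer, and let C, A, F be n×n matrices over the formal power series ring K[[λ]] such that: (d/dλ)A = A·C, the constant term of A is the identity matrix, and (d/dλ)F + C·F = p·λ^{p−1}·F·C_σ, where C_σ denotes the matrix obtained from C by substituting λ ↦ λ^p in every entry. Then F = A⁻¹·F₀·A_σ, where F₀ is the constant-term matrix of F and A_σ is obtained from A by substituting λ ↦ λ^p in every entry. -/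
open PowerSeries

/-!
Both `A F` and `F₀ A_σ` solve the linear system `Y' = p λ^(p-1) Y C_σ`: the first by the two
differential equations, the second because the chain rule gives `A_σ' = p λ^(p-1) (A C)_σ`. They
agree at `λ = 0`, and in characteristic zero a solution of `Y' = Y M` is determined by `Y(0)`:
if `λ^k` divides a solution `D` with `D(0) = 0`, it divides `D'`, hence `λ^(k+1)` divides `D`.
Finally `A(0) = I` makes `A` invertible.
-/

/-- The substitution `λ ↦ λ^p` on `K⟦λ⟧`: the ring homomorphism sending
`λ` to `λ^p`, described on coefficients. -/
noncomputable def substPow {K : Type*} [CommRing K] (p : ℕ) (f : K⟦X⟧) : K⟦X⟧ :=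
  PowerSeries.mk fun k => if p ∣ k then coeff (k / p) f else 0

namespace PowerSeries

variable {R : Type*} [CommRing R]

theorem substPow_eq_expand {p : ℕ} (hp : p ≠ 0) : substPow (K := R) p = expand p hp := by
  funext f
  ext k
  rw [coeff_expand]
  exact coeff_mk _ _

theorem derivative_expand (p : ℕ) (hp : p ≠ 0) (f : R⟦X⟧) :
    d⁄dX R (expand p hp f) = ((p : R⟦X⟧) * X ^ (p - 1)) * expand p hp (d⁄dX R f) := by
  rw [expand_apply, expand_apply, derivative_subst (HasSubst.X_pow hp), derivative_pow,
    derivative_X, mul_one, mul_comm]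

theorem X_pow_succ_dvd_of_X_pow_dvd_derivative [IsAddTorsionFree R] {f : R⟦X⟧} {k : ℕ}
    (hf : X ^ k ∣ d⁄dX R f) (hf0 : constantCoeff f = 0) : X ^ (k + 1) ∣ f := by
  rw [X_pow_dvd_iff] at hf ⊢
  rintro (_ | m) hm
  · rwa [coeff_zero_eq_constantCoeff_apply]
  · have h := hf m (by omega)
    rwa [coeff_derivative, ← Nat.cast_succ, mul_comm, ← nsmul_eq_mul,
      smul_eq_zero_iff_right m.succ_ne_zero] at h

end PowerSeries

namespace Matrix

variable {R : Type*} [CommRing R] {l m n : Type*}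

theorem map_derivative_map_expand (p : ℕ) (hp : p ≠ 0) (M : Matrix l m R⟦X⟧) :
    (M.map (expand p hp)).map (d⁄dX R)
      = ((p : R⟦X⟧) * X ^ (p - 1)) • (M.map (d⁄dX R)).map (expand p hp) := by
  ext i j : 1
  exact derivative_expand p hp (M i j)

variable [Fintype m]

theorem map_derivative_mul (M : Matrix l m R⟦X⟧) (N : Matrix m n R⟦X⟧) :
    (M * N).map (d⁄dX R) = M.map (d⁄dX R) * N + M * N.map (d⁄dX R) := by
  ext i j : 1
  simp only [map_apply, mul_apply, add_apply, map_sum, Derivation.leibniz, smul_eq_mul,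
    ← Finset.sum_add_distrib]
  exact Finset.sum_congr rfl fun _ _ => by ring

theorem eq_zero_of_map_derivative_eq_mul [IsAddTorsionFree R] {D : Matrix l m R⟦X⟧}
    {M : Matrix m m R⟦X⟧} (hD : D.map (d⁄dX R) = D * M) (hD0 : D.map constantCoeff = 0) :
    D = 0 := by
  have hdvd : ∀ k i j, X ^ k ∣ D i j := by
    intro k
    induction k with
    | zero => simp
    | succ k ih =>
      intro i j
      refine X_pow_succ_dvd_of_X_pow_dvd_derivative ?_ (congrFun₂ hD0 i j)
      rw [← map_apply (f := d⁄dX R), hD, mul_apply]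
      exact Finset.dvd_sum fun l _ => (ih i l).mul_right _
  ext i j n
  simpa using X_pow_dvd_iff.mp (hdvd (n + 1) i j) n n.lt_succ_self

theorem eq_of_map_derivative_eq_mul [IsAddTorsionFree R] {Y₁ Y₂ : Matrix l m R⟦X⟧}
    {M : Matrix m m R⟦X⟧} (h₁ : Y₁.map (d⁄dX R) = Y₁ * M) (h₂ : Y₂.map (d⁄dX R) = Y₂ * M)
    (h₀ : Y₁.map constantCoeff = Y₂.map constantCoeff) : Y₁ = Y₂ := by
  refine sub_eq_zero.mp (eq_zero_of_map_derivative_eq_mul (M := M) ?_ ?_)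
  · rw [Matrix.map_sub _ (map_sub _), h₁, h₂, Matrix.sub_mul]
  · rw [Matrix.map_sub _ (map_sub _), h₀, sub_self]

theorem isUnit_det_of_map_constantCoeff_eq_one [DecidableEq m] {A : Matrix m m R⟦X⟧}
    (hA : A.map constantCoeff = 1) : IsUnit A.det := by
  rw [isUnit_iff_constantCoeff, RingHom.map_det, RingHom.mapMatrix_apply, hA, det_one]
  exact isUnit_one

end Matrix

/-- The deformation-matrix identity `F(λ) = A(λ)⁻¹ F(0) A(λ^p)`:
if `A' = A·C` with `A(0) = I`, and the Frobenius matrix `F` satisfies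
`F' + C·F = p·λ^{p-1}·F·C_σ` (where `σ` is the substitution `λ ↦ λ^p`
applied entrywise), then `F = A⁻¹·F₀·A_σ`, `F₀` being the constant-term
matrix of `F`. -/
theorem frobenius_matrix_eq {K : Type*} [Field K] [CharZero K]
    (p : ℕ) (hp : 1 ≤ p) {n : ℕ} (C A F : Matrix (Fin n) (Fin n) K⟦X⟧)
    (hA : A.map (fun g => derivative K g) = A * C)
    (hA0 : A.map (fun g => constantCoeff g) = (1 : Matrix (Fin n) (Fin n) K))
    (hF : F.map (fun g => derivative K g) + C * F
      = ((p : K⟦X⟧) * X ^ (p - 1)) • (F * C.map (substPow p))) :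
    F = A⁻¹ * F.map (fun g => PowerSeries.C (constantCoeff g))
          * A.map (substPow p) := by
  have hp0 : p ≠ 0 := Nat.one_le_iff_ne_zero.mp hp
  rw [substPow_eq_expand hp0] at hF ⊢
  set F₀ := F.map (fun g => PowerSeries.C (constantCoeff g))
  set M := ((p : K⟦X⟧) * X ^ (p - 1)) • C.map (expand p hp0)
  have hAF : (A * F).map (d⁄dX K) = A * F * M := by
    rw [Matrix.map_derivative_mul, hA, eq_sub_of_add_eq hF]
    simp only [M, Matrix.mul_sub, Matrix.mul_smul, Matrix.mul_assoc]
    abel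
  have hF₀Aσ : (F₀ * A.map (expand p hp0)).map (d⁄dX K) = F₀ * A.map (expand p hp0) * M := by
    have hF₀ : F₀.map (d⁄dX K) = 0 := by ext i j : 1; simp [F₀]
    rw [Matrix.map_derivative_mul, hF₀, Matrix.zero_mul, zero_add,
      Matrix.map_derivative_map_expand, hA, Matrix.map_mul]
    simp only [M, Matrix.mul_smul, Matrix.mul_assoc]
  have h₀ : (A * F).map constantCoeff = (F₀ * A.map (expand p hp0)).map constantCoeff := by
    simp [F₀, Matrix.map_map, Function.comp_def, hA0]
  rw [Matrix.mul_assoc, ← Matrix.eq_of_map_derivative_eq_mul hAF hF₀Aσ h₀, ← Matrix.mul_assoc,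
    Matrix.nonsing_inv_mul _ (Matrix.isUnit_det_of_map_constantCoeff_eq_one hA0), Matrix.one_mul]
end

section
/- Let R be a commutative ℚ-algebra with a derivation ∂ : R → R, and let λ ∈ R with ∂(λ) = 1 such that λ and 1 − λ⁴ are invertible in R. Write D := λ·∂. Suppose f ∈ R satisfies D(D − 2) f = λ⁴·(D + 1)(D + 3) f. Then, setting e₁ := f and e₂ := (2λ)⁻¹·∂(f), one has D(e₁) = 2λ²·e₂ and D(e₂) = (3λ²/(2(1 − λ⁴)))·e₁ + (6λ⁴/(1 − λ⁴))·e₂. (This computes the connection matrix of the eigencomponent V₃ = (1,1,3,3) of the Dwork pencil of quartic K3 surfaces with respect to the basis {ω_{V₃}, (1/2λ)·(d/dλ)ω_{V₃}}, used to identify Deligne's canonical extension.) -/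
/-- The connection matrix of the eigencomponent `V₃ = (1,1,3,3)` of the Dwork
pencil of quartic K3 surfaces with respect to the basis
`{ω, (1/2λ)·(d/dλ)ω}`:  if `f` satisfies the Picard-Fuchs equation
`D(D-2)f = λ⁴(D+1)(D+3)f` with `D = λ·∂` (where `∂λ = 1` and `λ`, `1 - λ⁴`
are invertible, with inverses `l'` and `m'`), then with `e₁ := f` and
`e₂ := (1/(2λ))·∂f` one has `D e₁ = 2λ²·e₂` and
`D e₂ = (3λ²/(2(1-λ⁴)))·e₁ + (6λ⁴/(1-λ⁴))·e₂`. -/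
theorem connection_matrix_V3 {R : Type*} [CommRing R] [Algebra ℚ R]
    (der : R →+ R) (leibniz : ∀ a b : R, der (a * b) = a * der b + b * der a)
    (l l' m' : R) (hder_l : der l = 1)
    (hl : l * l' = 1) (hm : (1 - l ^ 4) * m' = 1)
    (f : R)
    (hPF : l * der (l * der f - 2 * f)
      = l ^ 4 * (l * der (l * der f + 3 * f) + (l * der f + 3 * f))) :
    l * der f = 2 * l ^ 2 * ((1 / 2 : ℚ) • (l' * der f)) ∧
    l * der ((1 / 2 : ℚ) • (l' * der f))
      = (3 / 2 : ℚ) • (l ^ 2 * m' * f)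
        + (6 : ℚ) • (l ^ 4 * m' * ((1 / 2 : ℚ) • (l' * der f))) := by
  have h1 : der 1 = 0 := by
    have h := leibniz 1 1
    simp at h
    exact h
  have hd2 : der (2 * f) = 2 * der f := by
    rw [show (2:R) * f = f + f by ring, map_add]; ring
  have hd3 : der (3 * f) = 3 * der f := by
    rw [show (3:R) * f = f + f + f by ring, map_add, map_add]; ring
  have hdl' : der l' = -(l' * l') := by
    have h0 : l * der l' + l' * der l = 0 := by
      rw [← leibniz, hl, h1]
    rw [hder_l, mul_one] at h0
    linear_combination l' * h0 - der l' * hl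
  have ha : algebraMap ℚ R (1/2) * 2 = 1 := by
    rw [show (2:R) = algebraMap ℚ R 2 from (map_ofNat _ 2).symm, ← map_mul]
    norm_num
  have hb3 : algebraMap ℚ R (3/2) = 3 * algebraMap ℚ R (1/2) := by
    rw [show (3/2:ℚ) = 3 * (1/2) by norm_num, map_mul, map_ofNat]
  have hc6 : algebraMap ℚ R (6:ℚ) = 6 := map_ofNat _ 6
  rw [map_sub, map_add, leibniz l (der f), hd2, hd3, hder_l] at hPF
  have key : (1 - l^4) * (l^2 * der (der f))
      = (1 + 5*l^4) * (l * der f) + 3 * l^4 * f := by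
    linear_combination hPF
  constructor
  · rw [Algebra.smul_def]
    linear_combination (-(l * der f)) * hl - (l^2 * l' * der f) * ha
  · have cancel : ∀ x y : R, (1 - l^4) * l^2 * x = (1 - l^4) * l^2 * y → x = y := by
      intro x y h
      have hx : ∀ z : R, m' * l'^2 * ((1 - l^4) * l^2 * z) = z := by
        intro z
        linear_combination ((l*l')^2 * z) * hm + ((1 + l*l') * z) * hl
      calc x = m' * l'^2 * ((1 - l^4) * l^2 * x) := (hx x).symm
        _ = m' * l'^2 * ((1 - l^4) * l^2 * y) := by rw [h]
        _ = y := hx y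
    rw [map_rat_smul der, leibniz l' (der f), hdl']
    simp only [Algebra.smul_def]
    rw [hb3, hc6]
    set a := algebraMap ℚ R (1/2) with hadef
    set g := der (der f)
    set u := der f
    apply cancel
    linear_combination a * key
      + (a*(1-l^4)*l^2*g - a*(1-l^4)*l*u*(l*l'+1) - 6*a*l^5*u*((1-l^4)*m')) * hl
      + (-(3*a*l^4*f) - 6*a*l^5*u) * hm
end
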